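/- Let A be an n×n real symmetric matrix with σ_2(A) ≥ 0 and trace(A) ≥ 0. Then the matrix of partial derivatives (∂σ_2/∂a_{ij}(A)) is positive semidefinite: for every x ∈ ℝ^n, Σ_{i,j} ∂σ_2/∂a_{ij}(A) x_i x_j ≥ 0. -/

import Mathlib

open Finset Matrix

/-- `σ₂(A)`, the second elementary symmetric function of the eigenvalues of a
real symmetric (Hermitian) matrix `A`. -/
noncomputable def sigma2 {n : ℕ} {A : Matrix (Fin n) (Fin n) ℝ} (hA : A.IsHermitian) : ℝ :=
  ∑ p ∈ Finset.univ.filter (fun p : Fin n × Fin n => p.1 < p.2),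
    hA.eigenvalues p.1 * hA.eigenvalues p.2

lemma sq_sum_eq_aux {n : ℕ} (f : Fin n → ℝ) :
    (∑ i, f i) ^ 2 = ∑ i, (f i) ^ 2 +
      2 * ∑ p ∈ Finset.univ.filter (fun p : Fin n × Fin n => p.1 < p.2), f p.1 * f p.2 := by
  classical
  have h0 : (∑ i, f i) ^ 2 = ∑ p ∈ Finset.univ ×ˢ Finset.univ, f p.1 * f p.2 := by
    rw [sq, Finset.sum_mul_sum, ← Finset.sum_product']
  have hswap : ∑ p ∈ Finset.univ.filter (fun p : Fin n × Fin n => p.2 < p.1), f p.1 * f p.2 =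
      ∑ p ∈ Finset.univ.filter (fun p : Fin n × Fin n => p.1 < p.2), f p.1 * f p.2 := by
    refine Finset.sum_nbij' (fun p => Prod.swap p) (fun p => Prod.swap p) ?_ ?_ ?_ ?_ ?_ <;>
      simp [mul_comm]
  have hdiag : ∑ p ∈ Finset.univ.filter (fun p : Fin n × Fin n => p.1 = p.2), f p.1 * f p.2 =
      ∑ i, (f i) ^ 2 := by
    refine Finset.sum_nbij' (fun p => p.1) (fun i => (i, i)) ?_ ?_ ?_ ?_ ?_
    · simp
    · simp
    · rintro ⟨a, b⟩ hp
      simp only [Finset.mem_filter] at hp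
      obtain ⟨-, h⟩ := hp
      subst h
      rfl
    · intro i _; rfl
    · rintro ⟨a, b⟩ hp
      simp only [Finset.mem_filter] at hp
      obtain ⟨-, h⟩ := hp
      subst h
      simp [sq]
  have huniv : (Finset.univ ×ˢ Finset.univ : Finset (Fin n × Fin n)) = Finset.univ := by
    simp
  rw [h0, huniv,
    ← Finset.sum_filter_add_sum_filter_not Finset.univ (fun p : Fin n × Fin n => p.1 < p.2),
    ← Finset.sum_filter_add_sum_filter_not
      (Finset.univ.filter (fun p : Fin n × Fin n => ¬ p.1 < p.2))
      (fun p : Fin n × Fin n => p.1 = p.2)]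
  have h1 : (Finset.univ.filter (fun p : Fin n × Fin n => ¬ p.1 < p.2)).filter
      (fun p : Fin n × Fin n => p.1 = p.2) =
      Finset.univ.filter (fun p : Fin n × Fin n => p.1 = p.2) := by
    ext p
    simp only [Finset.mem_filter, Finset.mem_univ, true_and, Fin.lt_def, Fin.ext_iff]
    omega
  have h2 : (Finset.univ.filter (fun p : Fin n × Fin n => ¬ p.1 < p.2)).filter
      (fun p : Fin n × Fin n => ¬ p.1 = p.2) =
      Finset.univ.filter (fun p : Fin n × Fin n => p.2 < p.1) := by
    ext p
    simp only [Finset.mem_filter, Finset.mem_univ, true_and, Fin.lt_def, Fin.ext_iff]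
    omega
  rw [h1, h2, hswap, hdiag]
  ring

lemma trace_eq_sum_eigs {n : ℕ} {A : Matrix (Fin n) (Fin n) ℝ} (hA : A.IsHermitian) :
    A.trace = ∑ i, hA.eigenvalues i := by
  conv_lhs => rw [hA.spectral_theorem, Unitary.conjStarAlgAut_apply]
  rw [Matrix.trace_mul_cycle]
  have : (star (hA.eigenvectorUnitary : Matrix (Fin n) (Fin n) ℝ)) *
      (hA.eigenvectorUnitary : Matrix (Fin n) (Fin n) ℝ) = 1 :=
    (Matrix.mem_unitaryGroup_iff').mp hA.eigenvectorUnitary.2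
  rw [this, one_mul, Matrix.trace_diagonal]
  simp

/-- If `A` is real symmetric with `σ₂(A) ≥ 0` and `trace(A) ≥ 0`, then the matrix
of partial derivatives `(∂σ₂/∂a_{ij})(A)`, whose entries are `trace(A) − a_{ii}`
on the diagonal and `−a_{ij}` off the diagonal, is positive semidefinite:
`Σ_{i,j} ∂σ₂/∂a_{ij}(A) x_i x_j ≥ 0` for every `x ∈ ℝⁿ`. -/
theorem stmt_5 (n : ℕ) (A : Matrix (Fin n) (Fin n) ℝ) (hA : A.IsHermitian)
    (hσ : 0 ≤ sigma2 hA) (htr : 0 ≤ A.trace) :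
    ∀ x : Fin n → ℝ,
      0 ≤ ∑ i, ∑ j,
        (if i = j then A.trace - A i i else -A i j) * x i * x j := by
  intro x
  set t := A.trace with ht
  -- each eigenvalue is at most the trace
  have hle : ∀ k, hA.eigenvalues k ≤ t := by
    intro k
    have hsum := trace_eq_sum_eigs hA
    have hid := sq_sum_eq_aux hA.eigenvalues
    have hsq : (hA.eigenvalues k) ^ 2 ≤ ∑ i, (hA.eigenvalues i) ^ 2 :=
      Finset.single_le_sum (f := fun i => (hA.eigenvalues i) ^ 2)
        (fun i _ => sq_nonneg _) (Finset.mem_univ k)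
    have h2 : ∑ i, (hA.eigenvalues i) ^ 2 ≤ t ^ 2 := by
      rw [ht, hsum, hid]
      have : (0:ℝ) ≤ 2 * sigma2 hA := by positivity
      unfold sigma2 at this
      linarith
    nlinarith [hsq.trans h2]
  -- the matrix t • 1 - A is positive semidefinite
  set M : Matrix (Fin n) (Fin n) ℝ := t • (1 : Matrix (Fin n) (Fin n) ℝ) - A with hM
  have hMdecomp : M = (hA.eigenvectorUnitary : Matrix (Fin n) (Fin n) ℝ) *
      Matrix.diagonal (fun i => t - hA.eigenvalues i) *
      (star (hA.eigenvectorUnitary : Matrix (Fin n) (Fin n) ℝ)) := by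
    have hU : (hA.eigenvectorUnitary : Matrix (Fin n) (Fin n) ℝ) *
        (star (hA.eigenvectorUnitary : Matrix (Fin n) (Fin n) ℝ)) = 1 :=
      (Matrix.mem_unitaryGroup_iff).mp hA.eigenvectorUnitary.2
    have hd : Matrix.diagonal (fun i : Fin n => t - hA.eigenvalues i) =
        t • (1 : Matrix (Fin n) (Fin n) ℝ) -
          Matrix.diagonal (RCLike.ofReal ∘ hA.eigenvalues) := by
      ext i j
      rcases eq_or_ne i j with h | h <;>
        simp [Matrix.diagonal_apply, Matrix.one_apply, h]
    rw [hM, hd, Matrix.mul_sub, Matrix.sub_mul, Matrix.mul_smul, Matrix.mul_one,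
      Matrix.smul_mul, hU, ← Unitary.conjStarAlgAut_apply (S := ℝ), ← hA.spectral_theorem]
  have hMpsd : M.PosSemidef := by
    rw [hMdecomp]
    exact (Matrix.posSemidef_diagonal_iff.mpr fun i => sub_nonneg.mpr (hle i)
      ).mul_mul_conjTranspose_same _
  have := hMpsd.dotProduct_mulVec_nonneg x
  have hq : star x ⬝ᵥ M *ᵥ x = ∑ i, ∑ j,
      (if i = j then t - A i i else -A i j) * x i * x j := by
    simp only [star_trivial, dotProduct, Matrix.mulVec, dotProduct,
      Finset.mul_sum]
    refine Finset.sum_congr rfl fun i _ => Finset.sum_congr rfl fun j _ => ?_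
    rw [hM]
    by_cases h : i = j <;>
      simp [h, Matrix.sub_apply, Matrix.smul_apply, Matrix.one_apply] <;> ring
  rw [hq] at this
  simpa using this
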